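/- Let $\sigma \in (5/3, 2)$, $\mu = (\sigma - 5/3)^{-1}$, $\beta \in (0, \sigma - 5/3)$, and suppose $F : [0,\infty) \to [0,\infty)$ is a (time-dependent) probability density whose moment $M_\beta(\tau) = \int_0^\infty (1+\xi)^\beta F(\xi,\tau)\,d\xi$ satisfies the differential inequality $\partial_\tau M_\beta + \beta\mu M_\beta \le \int_0^\infty\!\!\int_0^\infty y^{-\sigma}\big((1+x)^{1/3} + y^{1/3}\big)^2 F(x)\,(1+x)^\beta\big[\big(1 + \tfrac{y}{1+x}\big)^\beta - 1\big]\,dy\,dx$. Then $\partial_\tau M_\beta + \beta\mu M_\beta \le C_{\beta,\sigma}$ where $C_{\beta,\sigma} = \int_0^\infty y^{-\sigma}\big[(1+y)^\beta - 1\big](1 + y^{1/3})^2\,dy < \infty$; in particular the set $\{M_\beta \le C_{\beta,\sigma}/(\beta\mu)\}$ is forward invariant. -/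

import Mathlib

/-!
Substituting `y ↦ (1 + x) y` in the inner integral turns it into
`(1 + x) ^ (β + 5/3 - σ) * F x * C_{β,σ}`. Since `β + 5/3 - σ ≤ 0` the weight is at most `1`,
and `∫ F = 1` leaves `C_{β,σ}`. The integrand of `C_{β,σ}` is `O(y ^ (1 - σ))` at `0` and
`O(y ^ (β + 2/3 - σ))` at `∞`, both integrable for `σ < 2` and `β + 5/3 < σ`. Forward invariance
follows because `(M τ - C/a) * exp (a τ)` is antitone when `M' + a M ≤ C`, with `a = βμ`.
-/

open MeasureTheory Set Real

noncomputable def momentKernel (σ β y : ℝ) : ℝ :=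
  y ^ (-σ) * ((1 + y) ^ β - 1) * (1 + y ^ ((1:ℝ)/3)) ^ 2

noncomputable def scaledMomentKernel (σ β c y : ℝ) : ℝ :=
  y ^ (-σ) * (c ^ ((1:ℝ)/3) + y ^ ((1:ℝ)/3)) ^ 2 * c ^ β * ((1 + y / c) ^ β - 1)

section MomentKernel

variable {σ β : ℝ}

lemma one_add_rpow_sub_one_nonneg (hβ : 0 ≤ β) {y : ℝ} (hy : 0 ≤ y) : 0 ≤ (1 + y) ^ β - 1 :=
  sub_nonneg.2 (one_le_rpow (by linarith) hβ)

lemma momentKernel_nonneg (hβ : 0 ≤ β) {y : ℝ} (hy : 0 ≤ y) : 0 ≤ momentKernel σ β y := by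
  have := one_add_rpow_sub_one_nonneg hβ hy
  unfold momentKernel
  positivity

lemma measurable_momentKernel : Measurable (momentKernel σ β) := by
  unfold momentKernel
  fun_prop

lemma momentKernel_le_of_le_one (hβ0 : 0 ≤ β) (hβ1 : β ≤ 1) {y : ℝ} (hy0 : 0 < y) (hy1 : y ≤ 1) :
    momentKernel σ β y ≤ 4 * y ^ (1 - σ) := by
  have hβy : (1 + y) ^ β - 1 ≤ y := by
    have := rpow_one_add_le_one_add_mul_self (by linarith : -1 ≤ y) hβ0 hβ1
    nlinarith
  have hcube : (1 + y ^ ((1:ℝ)/3)) ^ 2 ≤ 4 := by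
    have h1 : y ^ ((1:ℝ)/3) ≤ 1 := rpow_le_one hy0.le hy1 (by norm_num)
    have h0 : 0 ≤ y ^ ((1:ℝ)/3) := rpow_nonneg hy0.le _
    nlinarith
  calc momentKernel σ β y ≤ y ^ (-σ) * y * 4 := by
        unfold momentKernel
        gcongr
    _ = 4 * y ^ (1 - σ) := by rw [sub_eq_neg_add, rpow_add_one hy0.ne']; ring

lemma momentKernel_le_of_one_le (hβ : 0 ≤ β) {y : ℝ} (hy : 1 ≤ y) :
    momentKernel σ β y ≤ 2 ^ β * 4 * y ^ (β + 2/3 - σ) := by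
  have hy0 : 0 < y := by linarith
  have hβy : (1 + y) ^ β - 1 ≤ 2 ^ β * y ^ β := by
    rw [← mul_rpow zero_le_two hy0.le]
    have := rpow_le_rpow (by linarith) (by linarith : 1 + y ≤ 2 * y) hβ
    linarith
  have hcube : (1 + y ^ ((1:ℝ)/3)) ^ 2 ≤ 4 * y ^ ((2:ℝ)/3) := by
    have h1 : 1 ≤ y ^ ((1:ℝ)/3) := one_le_rpow hy (by norm_num)
    have h2 : y ^ ((2:ℝ)/3) = (y ^ ((1:ℝ)/3)) ^ 2 := by
      rw [← rpow_two, ← rpow_mul hy0.le]; norm_num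
    nlinarith
  calc momentKernel σ β y ≤ y ^ (-σ) * (2 ^ β * y ^ β) * (4 * y ^ ((2:ℝ)/3)) := by
        have := one_add_rpow_sub_one_nonneg hβ hy0.le
        unfold momentKernel
        gcongr
    _ = 2 ^ β * 4 * y ^ (β + 2/3 - σ) := by
        rw [show β + 2/3 - σ = -σ + β + 2/3 by ring, rpow_add hy0, rpow_add hy0]; ring

lemma integrableOn_momentKernel (hσ : σ < 2) (hβ : 0 ≤ β) (hβσ : β + 5/3 < σ) :
    IntegrableOn (momentKernel σ β) (Ioi 0) := by
  rw [← Ioc_union_Ioi_eq_Ioi zero_le_one]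
  refine IntegrableOn.union ?_ ?_
  · have hdom : IntegrableOn (fun y : ℝ => 4 * y ^ (1 - σ)) (Ioc 0 1) :=
      (((intervalIntegral.integrableOn_Ioo_rpow_iff zero_lt_one).2 (by linarith)).congr_set_ae
        Ioo_ae_eq_Ioc.symm).const_mul 4
    refine hdom.mono' measurable_momentKernel.aestronglyMeasurable <|
      (ae_restrict_iff' measurableSet_Ioc).2 (.of_forall fun y hy => ?_)
    rw [norm_of_nonneg (momentKernel_nonneg hβ hy.1.le)]
    exact momentKernel_le_of_le_one hβ (by linarith) hy.1 hy.2
  · have hdom : IntegrableOn (fun y : ℝ => 2 ^ β * 4 * y ^ (β + 2/3 - σ)) (Ioi 1) :=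
      (integrableOn_Ioi_rpow_of_lt (by linarith) zero_lt_one).const_mul _
    refine hdom.mono' measurable_momentKernel.aestronglyMeasurable <|
      (ae_restrict_iff' measurableSet_Ioi).2 (.of_forall fun y hy => ?_)
    rw [norm_of_nonneg (momentKernel_nonneg hβ (zero_le_one.trans (le_of_lt hy)))]
    exact momentKernel_le_of_one_le hβ (le_of_lt hy)

lemma scaledMomentKernel_mul {c z : ℝ} (hc : 0 < c) (hz : 0 ≤ z) :
    scaledMomentKernel σ β c (c * z) = c ^ (β + 2/3 - σ) * momentKernel σ β z := by
  unfold scaledMomentKernel momentKernel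
  rw [mul_rpow hc.le hz, mul_rpow hc.le hz, mul_div_cancel_left₀ _ hc.ne',
    show β + 2/3 - σ = -σ + (1/3) * 2 + β by ring, rpow_add hc, rpow_add hc, rpow_mul hc.le,
    rpow_two]
  ring

lemma integral_scaledMomentKernel {c : ℝ} (hc : 0 < c) :
    ∫ y in Ioi 0, scaledMomentKernel σ β c y =
      c ^ (β + 5/3 - σ) * ∫ y in Ioi 0, momentKernel σ β y := by
  have hsubst := integral_comp_mul_left_Ioi' (scaledMomentKernel σ β c) 0 hc
  rw [mul_zero] at hsubst
  rw [← hsubst, smul_eq_mul,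
    setIntegral_congr_fun measurableSet_Ioi fun z hz => scaledMomentKernel_mul hc (le_of_lt hz),
    integral_const_mul, show β + 5/3 - σ = (β + 2/3 - σ) + 1 by ring, rpow_add_one hc.ne']
  ring

end MomentKernel

lemma setIntegral_one_add_rpow_mul_le {f : ℝ → ℝ} {p : ℝ} (hp : p ≤ 0)
    (hf : IntegrableOn f (Ioi 0)) (hf0 : ∀ x ∈ Ioi (0:ℝ), 0 ≤ f x) :
    ∫ x in Ioi 0, (1 + x) ^ p * f x ≤ ∫ x in Ioi 0, f x := by
  have hweight : ∀ x ∈ Ioi (0:ℝ), (1 + x) ^ p ≤ 1 := fun x hx =>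
    rpow_le_one_of_one_le_of_nonpos (by linarith [mem_Ioi.1 hx]) hp
  have hint : IntegrableOn (fun x => (1 + x) ^ p * f x) (Ioi 0) :=
    hf.bdd_mul ((measurable_const.add measurable_id).pow_const p).aestronglyMeasurable <|
      (ae_restrict_iff' measurableSet_Ioi).2 <| .of_forall fun x hx => by
      rw [norm_of_nonneg (rpow_nonneg (by linarith [mem_Ioi.1 hx]) _)]
      exact hweight x hx
  refine setIntegral_mono_on hint hf measurableSet_Ioi fun x hx => ?_
  exact mul_le_of_le_one_left (hf0 x hx) (hweight x hx)

lemma integral_collision_le {σ β : ℝ} (hβ : 0 ≤ β) (hβσ : β + 5/3 ≤ σ) {f : ℝ → ℝ}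
    (hf : IntegrableOn f (Ioi 0)) (hf0 : ∀ x ∈ Ioi (0:ℝ), 0 ≤ f x) :
    ∫ x in Ioi (0:ℝ), ∫ y in Ioi (0:ℝ),
        y ^ (-σ) * ((1 + x) ^ ((1:ℝ)/3) + y ^ ((1:ℝ)/3)) ^ 2 * f x * (1 + x) ^ β
          * ((1 + y / (1 + x)) ^ β - 1) ≤
      (∫ x in Ioi 0, f x) * ∫ y in Ioi 0, momentKernel σ β y := by
  set C := ∫ y in Ioi 0, momentKernel σ β y
  have hC : 0 ≤ C :=
    setIntegral_nonneg measurableSet_Ioi fun y hy => momentKernel_nonneg hβ (le_of_lt hy)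
  have hinner : ∀ x ∈ Ioi (0:ℝ), (∫ y in Ioi (0:ℝ),
      y ^ (-σ) * ((1 + x) ^ ((1:ℝ)/3) + y ^ ((1:ℝ)/3)) ^ 2 * f x * (1 + x) ^ β
        * ((1 + y / (1 + x)) ^ β - 1)) = (1 + x) ^ (β + 5/3 - σ) * (f x * C) := fun x hx => by
    rw [show (1 + x) ^ (β + 5/3 - σ) * (f x * C) = f x * ((1 + x) ^ (β + 5/3 - σ) * C) by ring,
      ← integral_scaledMomentKernel (by linarith [mem_Ioi.1 hx]), ← integral_const_mul]
    unfold scaledMomentKernel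
    congr 1 with y
    ring
  rw [setIntegral_congr_fun measurableSet_Ioi hinner, ← integral_mul_const]
  exact setIntegral_one_add_rpow_mul_le (by linarith) (hf.mul_const C)
    fun x hx => mul_nonneg (hf0 x hx) hC

lemma le_div_of_hasDerivAt_add_mul_le {M M' : ℝ → ℝ} {a C s t : ℝ} (ha : a ≠ 0)
    (hd : ∀ τ ∈ Icc s t, HasDerivAt M (M' τ) τ) (hle : ∀ τ ∈ Icc s t, M' τ + a * M τ ≤ C)
    (hs : M s ≤ C / a) (hst : s ≤ t) : M t ≤ C / a := by
  set G : ℝ → ℝ := fun τ => (M τ - C / a) * exp (τ * a)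
  have hG : ∀ τ ∈ Icc s t, HasDerivAt G ((M' τ + a * M τ - C) * exp (τ * a)) τ :=
      fun τ hτ => by
    refine (((hd τ hτ).sub_const (C / a)).mul ((hasDerivAt_mul_const a).exp)).congr_deriv ?_
    field_simp
    ring
  have hanti : AntitoneOn G (Icc s t) :=
    antitoneOn_of_hasDerivWithinAt_nonpos (convex_Icc s t)
      (fun τ hτ => (hG τ hτ).continuousAt.continuousWithinAt)
      (fun τ hτ => (hG τ (interior_subset hτ)).hasDerivWithinAt) fun τ hτ =>
      mul_nonpos_of_nonpos_of_nonneg (by linarith [hle τ (interior_subset hτ)]) (exp_pos _).le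
  have hGt : G t ≤ 0 := (hanti (left_mem_Icc.2 hst) (right_mem_Icc.2 hst) hst).trans <|
    mul_nonpos_of_nonpos_of_nonneg (by linarith) (exp_pos _).le
  exact sub_nonpos.1 (nonpos_of_mul_nonpos_left hGt (exp_pos _))

theorem stmt15 (σ β μ : ℝ) (hσ : σ ∈ Ioo (5/3 : ℝ) 2) (hβ : β ∈ Ioo (0:ℝ) (σ - 5/3))
    (hμ : μ = (σ - 5/3)⁻¹)
    (F : ℝ → ℝ → ℝ)
    (hFnn : ∀ τ : ℝ, 0 ≤ τ → ∀ x : ℝ, 0 ≤ x → 0 ≤ F x τ)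
    (hFint : ∀ τ : ℝ, 0 ≤ τ → IntegrableOn (fun x => F x τ) (Ioi (0:ℝ)) volume)
    (hFprob : ∀ τ : ℝ, 0 ≤ τ → ∫ x in Ioi (0:ℝ), F x τ = 1)
    (M M' : ℝ → ℝ)
    (hd : ∀ τ : ℝ, 0 ≤ τ → HasDerivAt M (M' τ) τ)
    (hineq : ∀ τ : ℝ, 0 ≤ τ → M' τ + β * μ * M τ ≤
      ∫ x in Ioi (0:ℝ), ∫ y in Ioi (0:ℝ),
        y ^ (-σ) * ((1 + x) ^ ((1:ℝ)/3) + y ^ ((1:ℝ)/3)) ^ 2 * F x τ * (1 + x) ^ β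
          * ((1 + y / (1 + x)) ^ β - 1)) :
    IntegrableOn (fun y : ℝ => y ^ (-σ) * ((1 + y) ^ β - 1) * (1 + y ^ ((1:ℝ)/3)) ^ 2)
        (Ioi (0:ℝ)) volume ∧
    (∀ τ : ℝ, 0 ≤ τ → M' τ + β * μ * M τ ≤
      ∫ y in Ioi (0:ℝ), y ^ (-σ) * ((1 + y) ^ β - 1) * (1 + y ^ ((1:ℝ)/3)) ^ 2) ∧
    (∀ s t : ℝ, 0 ≤ s → s ≤ t →
      M s ≤ (∫ y in Ioi (0:ℝ), y ^ (-σ) * ((1 + y) ^ β - 1) * (1 + y ^ ((1:ℝ)/3)) ^ 2)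
              / (β * μ) →
      M t ≤ (∫ y in Ioi (0:ℝ), y ^ (-σ) * ((1 + y) ^ β - 1) * (1 + y ^ ((1:ℝ)/3)) ^ 2)
              / (β * μ)) := by
  obtain ⟨hσ1, hσ2⟩ := hσ
  obtain ⟨hβ0, hβσ⟩ := hβ
  have hbound : ∀ τ : ℝ, 0 ≤ τ → M' τ + β * μ * M τ ≤ ∫ y in Ioi 0, momentKernel σ β y :=
    fun τ hτ => calc
      _ ≤ _ := hineq τ hτ
      _ ≤ (∫ x in Ioi 0, F x τ) * ∫ y in Ioi 0, momentKernel σ β y :=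
        integral_collision_le hβ0.le (by linarith) (hFint τ hτ) fun x hx =>
          hFnn τ hτ x (le_of_lt hx)
      _ = _ := by rw [hFprob τ hτ, one_mul]
  have hβμ : β * μ ≠ 0 := by
    rw [hμ]
    exact mul_ne_zero hβ0.ne' (inv_ne_zero (by linarith))
  refine ⟨integrableOn_momentKernel hσ2 hβ0.le (by linarith), hbound, fun s t hs hst hMs => ?_⟩
  exact le_div_of_hasDerivAt_add_mul_le hβμ (fun τ hτ => hd τ (hs.trans hτ.1))
    (fun τ hτ => hbound τ (hs.trans hτ.1)) hMs hst
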